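/- (Implication (C2∀) ⇒ (C1∞) of orbit propagation.) Let X be an irreducible topological space, f : X → X any map, and S ⊆ X. Suppose that every subset Q ⊆ S that is a complete set of representatives for grand-orbit equivalence on S is dense in X. Then for every proper closed subset Y ⊊ X, the set S \ ⋃_{P ∈ Y ∩ S} O_f^grand(P) is dense in X. -/
import Mathlib


/-- The forward orbit of `P` under `f`: all iterates `f^[n] P` for `n ≥ 0`. -/
def fwdOrbit {X : Type*} (f : X → X) (P : X) : Set X := Set.range fun n => f^[n] P

/-- The grand orbit of `P` under `f`: all points whose forward orbit meets that of `P`. -/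
def grandOrbit {X : Type*} (f : X → X) (P : X) : Set X :=
  {Q | (fwdOrbit f P ∩ fwdOrbit f Q).Nonempty}

/-- Grand-orbit equivalence: `P ≡_f Q` iff the forward orbits of `P` and `Q` meet. -/
def goEquiv {X : Type*} (f : X → X) (P Q : X) : Prop :=
  (fwdOrbit f P ∩ fwdOrbit f Q).Nonempty

/-- `Q` is a complete set of representatives for grand-orbit equivalence on `S`:
`Q ⊆ S` and every point of `S` is grand-orbit equivalent to exactly one point of `Q`. -/
def IsCompleteReps {X : Type*} (f : X → X) (S Q : Set X) : Prop :=
  Q ⊆ S ∧ ∀ s ∈ S, ∃! q, q ∈ Q ∧ goEquiv f s q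

lemma goEquiv_refl {X : Type*} (f : X → X) (P : X) : goEquiv f P P :=
  ⟨P, ⟨0, rfl⟩, ⟨0, rfl⟩⟩

lemma goEquiv_symm {X : Type*} {f : X → X} {P Q : X} (h : goEquiv f P Q) :
    goEquiv f Q P := by
  obtain ⟨x, hx1, hx2⟩ := h; exact ⟨x, hx2, hx1⟩

lemma goEquiv_trans {X : Type*} {f : X → X} {P Q R : X} (h1 : goEquiv f P Q)
    (h2 : goEquiv f Q R) : goEquiv f P R := by
  obtain ⟨x, ⟨m, hm⟩, ⟨n, hn⟩⟩ := h1
  obtain ⟨y, ⟨c, hc⟩, ⟨d, hd⟩⟩ := h2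
  simp only at hm hn hc hd
  refine ⟨f^[c] x, ⟨c + m, ?_⟩, ⟨n + d, ?_⟩⟩
  · show f^[c + m] P = f^[c] x
    rw [Function.iterate_add_apply, hm]
  · show f^[n + d] R = f^[c] x
    calc f^[n + d] R = f^[n] (f^[d] R) := Function.iterate_add_apply f n d R
      _ = f^[n] y := by rw [hd]
      _ = f^[n] (f^[c] Q) := by rw [hc]
      _ = f^[n + c] Q := (Function.iterate_add_apply f n c Q).symm
      _ = f^[c + n] Q := by rw [Nat.add_comm]
      _ = f^[c] (f^[n] Q) := Function.iterate_add_apply f c n Q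
      _ = f^[c] x := by rw [hn]

/-- (C2∀) ⇒ (C1∞): on an irreducible space, if every complete set of representatives
for grand-orbit equivalence on `S` is dense, then for every proper closed `Y ⊊ X`,
removing from `S` the grand orbits of all points of `Y ∩ S` leaves a dense set. -/
theorem C2forall_implies_C1infty {X : Type*} [TopologicalSpace X] [IrreducibleSpace X]
    (f : X → X) (S : Set X)
    (hC2 : ∀ Q : Set X, IsCompleteReps f S Q → Dense Q) :
    ∀ Y : Set X, IsClosed Y → Y ≠ Set.univ →
      Dense (S \ ⋃ P ∈ Y ∩ S, grandOrbit f P) := by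
  classical
  intro Y hYc hYne
  set T := S \ ⋃ P ∈ Y ∩ S, grandOrbit f P with hT
  -- the grand-orbit class of `s` inside `S`
  set C : X → Set X := fun s => {q | q ∈ S ∧ goEquiv f s q} with hC
  -- a representative of a class, preferring points of `Y`
  set repSet : Set X → X := fun c =>
    if h : (c ∩ Y).Nonempty then h.some
    else if h2 : c.Nonempty then h2.some else Classical.arbitrary X with hrepSet
  set rep : X → X := fun s => repSet (C s) with hrep
  have hrep_mem : ∀ c : Set X, c.Nonempty → repSet c ∈ c := by
    intro c hc
    rw [hrepSet]
    dsimp only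
    by_cases h1 : (c ∩ Y).Nonempty
    · rw [dif_pos h1]; exact h1.some_mem.1
    · rw [dif_neg h1, dif_pos hc]; exact hc.some_mem
  have hrepY : ∀ c : Set X, (c ∩ Y).Nonempty → repSet c ∈ Y := by
    intro c h1
    rw [hrepSet]
    dsimp only
    rw [dif_pos h1]
    exact h1.some_mem.2
  have hCne : ∀ s ∈ S, (C s).Nonempty := fun s hs => ⟨s, hs, goEquiv_refl f s⟩
  have hC_eq : ∀ s t : X, goEquiv f s t → C s = C t := by
    intro s t hst
    ext q
    exact ⟨fun hq => ⟨hq.1, goEquiv_trans (goEquiv_symm hst) hq.2⟩,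
      fun hq => ⟨hq.1, goEquiv_trans hst hq.2⟩⟩
  have hrep_memC : ∀ s ∈ S, rep s ∈ C s := fun s hs => hrep_mem (C s) (hCne s hs)
  -- `rep '' S` is a complete set of representatives
  have hcr : IsCompleteReps f S (rep '' S) := by
    constructor
    · rintro q ⟨s, hs, rfl⟩
      exact (hrep_memC s hs).1
    · intro s hs
      refine ⟨rep s, ⟨⟨s, hs, rfl⟩, (hrep_memC s hs).2⟩, ?_⟩
      rintro q' ⟨⟨t, ht, rfl⟩, hgo⟩
      have h1 : goEquiv f t (rep t) := (hrep_memC t ht).2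
      have hst : goEquiv f s t := goEquiv_trans hgo (goEquiv_symm h1)
      show repSet (C t) = repSet (C s)
      rw [hC_eq s t hst]
  have hQdense : Dense (rep '' S) := hC2 _ hcr
  -- every representative lies in `Y ∪ T`
  have hQsub : rep '' S ⊆ Y ∪ T := by
    rintro q ⟨s, hs, rfl⟩
    by_cases h : (C s ∩ Y).Nonempty
    · exact Or.inl (hrepY (C s) h)
    · refine Or.inr ⟨(hrep_memC s hs).1, ?_⟩
      intro hmem
      simp only [Set.mem_iUnion] at hmem
      obtain ⟨P, ⟨hPY, hPS⟩, hPgo⟩ := hmem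
      have hPgo' : goEquiv f P (rep s) := hPgo
      have : goEquiv f s P :=
        goEquiv_trans (hrep_memC s hs).2 (goEquiv_symm hPgo')
      exact h ⟨P, ⟨hPS, this⟩, hPY⟩
  -- conclude by irreducibility
  rw [dense_iff_inter_open]
  intro U hU hUne
  have hYcne : Yᶜ.Nonempty := by
    rw [Set.nonempty_compl]; exact hYne
  have hV : IsOpen (U ∩ Yᶜ) := hU.inter hYc.isOpen_compl
  have hVne : (U ∩ Yᶜ).Nonempty :=
    nonempty_preirreducible_inter hU hYc.isOpen_compl hUne hYcne
  obtain ⟨q, hqV, hqQ⟩ := hQdense.inter_open_nonempty _ hV hVne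
  rcases hQsub hqQ with hqY | hqT
  · exact absurd hqY hqV.2
  · exact ⟨q, hqV.1, hqT⟩
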